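/- arXiv:1701.06788 — 2 statements merged into one kernel-verified Lean document; each statement's English description precedes it below -/
import Mathlib

section
/- Let X and Y be topological spaces and f : X → Y a continuous map with the following lifting-up-to-homotopy property: for every n ≥ 0 and every pair of continuous maps g : S^n → X and G : D^{n+1} → Y (where S^n is the unit sphere and D^{n+1} the closed unit ball in (n+1)-dimensional Euclidean space) such that the restriction of G to S^n equals f ∘ g, there exists a continuous map L : D^{n+1} → X whose restriction to S^n is homotopic (as a map S^n → X) to g. Then for every n ≥ 0 and every continuous map g : S^n → X such that f ∘ g extends to a continuous map D^{n+1} → Y, the map g itself extends to a continuous map D^{n+1} → X. -/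
open Metric

/-- The continuous inclusion of the unit sphere `S^n` into the closed unit ball `D^{n+1}`
in `ℝ^{n+1}`. -/
noncomputable def sphereInclusion (n : ℕ) :
    C(sphere (0 : EuclideanSpace ℝ (Fin (n + 1))) 1,
      closedBall (0 : EuclideanSpace ℝ (Fin (n + 1))) 1) :=
  ⟨Set.inclusion sphere_subset_closedBall, continuous_inclusion sphere_subset_closedBall⟩

/-!
The lift `L` given by the hypothesis restricts on `S^n` to a map homotopic to `g`, and it is
nullhomotopic because `D^{n+1}` is contractible; hence `g` is nullhomotopic. A nullhomotopy
`I × S^n → X` of `g` is constant on `{0} × S^n`, so it descends along the quotient map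
`(t, s) ↦ t • s` onto `D^{n+1}`, and its restriction to `{1} × S^n = S^n` is `g`.
-/

open Topology unitInterval

namespace ContinuousMap

variable {E : Type*} [NormedAddCommGroup E] [NormedSpace ℝ E]

noncomputable def polarToClosedBall : C(I × sphere (0 : E) 1, closedBall (0 : E) 1) where
  toFun p := ⟨(p.1 : ℝ) • (p.2 : E), by
    simpa [norm_smul, abs_of_nonneg p.1.2.1] using p.1.2.2⟩

@[simp]
lemma coe_polarToClosedBall_apply (p : I × sphere (0 : E) 1) :
    (polarToClosedBall p : E) = (p.1 : ℝ) • (p.2 : E) := rfl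

lemma polarToClosedBall_one (s : sphere (0 : E) 1) :
    polarToClosedBall (1, s) = ⟨s, sphere_subset_closedBall s.2⟩ :=
  Subtype.ext (one_smul ℝ (s : E))

lemma surjective_polarToClosedBall [Nontrivial E] :
    Function.Surjective (polarToClosedBall (E := E)) := by
  rintro ⟨x, hx⟩
  rw [mem_closedBall_zero_iff] at hx
  obtain rfl | hx0 := eq_or_ne x 0
  · obtain ⟨s, hs⟩ := (NormedSpace.sphere_nonempty (x := (0 : E))).mpr zero_le_one
    exact ⟨(0, ⟨s, hs⟩), Subtype.ext (zero_smul ℝ s)⟩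
  · refine ⟨(⟨‖x‖, norm_nonneg x, hx⟩, ⟨‖x‖⁻¹ • x, ?_⟩), Subtype.ext ?_⟩
    · simp [norm_smul, hx0]
    · simp [smul_smul, hx0]

lemma isQuotientMap_polarToClosedBall [Nontrivial E] [FiniteDimensional ℝ E] :
    IsQuotientMap (polarToClosedBall (E := E)) :=
  have : ProperSpace E := FiniteDimensional.proper ℝ E
  .of_surjective_continuous surjective_polarToClosedBall polarToClosedBall.continuous

variable {X : Type*} [TopologicalSpace X]

lemma factorsThrough_polarToClosedBall {F : C(I × sphere (0 : E) 1, X)}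
    (hF : ∀ s s', F (0, s) = F (0, s')) : Function.FactorsThrough F polarToClosedBall := by
  rintro ⟨t, s⟩ ⟨t', s'⟩ h
  have h' : (t : ℝ) • (s : E) = (t' : ℝ) • (s' : E) := congrArg Subtype.val h
  obtain rfl : t = t' := Subtype.ext <| by
    simpa [norm_smul, abs_of_nonneg t.2.1, abs_of_nonneg t'.2.1] using congrArg norm h'
  obtain rfl | ht := eq_or_ne t 0
  · exact hF s s'
  · rw [Subtype.ext (smul_right_injective E (fun h ↦ ht (Subtype.ext h)) h')]

theorem Nullhomotopic.exists_extension_closedBall [Nontrivial E] [FiniteDimensional ℝ E]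
    {g : C(sphere (0 : E) 1, X)} (hg : g.Nullhomotopic) :
    ∃ g' : C(closedBall (0 : E) 1, X),
      ∀ s : sphere (0 : E) 1, g' ⟨s, sphere_subset_closedBall s.2⟩ = g s := by
  obtain ⟨y, ⟨H⟩⟩ := hg
  have hH : Function.FactorsThrough H.symm.toContinuousMap polarToClosedBall :=
    factorsThrough_polarToClosedBall fun s s' ↦ by simp
  refine ⟨isQuotientMap_polarToClosedBall.lift _ hH, fun s ↦ ?_⟩
  rw [← polarToClosedBall_one, ← comp_apply, IsQuotientMap.lift_comp]
  simp

end ContinuousMap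

open ContinuousMap in
/-- If `f : X → Y` has the property that in every commutative square formed by
`g : S^n → X` and `G : D^{n+1} → Y` there is a lift `L : D^{n+1} → X` whose restriction
to `S^n` is homotopic to `g`, then any `g : S^n → X` such that `f ∘ g` extends to
`D^{n+1}` itself extends to `D^{n+1}`. -/
theorem extension_of_semiEquivalence {X Y : Type*} [TopologicalSpace X] [TopologicalSpace Y]
    (f : C(X, Y))
    (hf : ∀ (n : ℕ) (g : C(sphere (0 : EuclideanSpace ℝ (Fin (n + 1))) 1, X))
        (G : C(closedBall (0 : EuclideanSpace ℝ (Fin (n + 1))) 1, Y)),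
        (∀ x, G (sphereInclusion n x) = f (g x)) →
        ∃ L : C(closedBall (0 : EuclideanSpace ℝ (Fin (n + 1))) 1, X),
          (L.comp (sphereInclusion n)).Homotopic g) :
    ∀ (n : ℕ) (g : C(sphere (0 : EuclideanSpace ℝ (Fin (n + 1))) 1, X)),
      (∃ G : C(closedBall (0 : EuclideanSpace ℝ (Fin (n + 1))) 1, Y),
        ∀ x, G (sphereInclusion n x) = f (g x)) →
      ∃ g' : C(closedBall (0 : EuclideanSpace ℝ (Fin (n + 1))) 1, X),
        ∀ x, g' (sphereInclusion n x) = g x := by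
  rintro n g ⟨G, hG⟩
  obtain ⟨L, hL⟩ := hf n g G hG
  have : ContractibleSpace (closedBall (0 : EuclideanSpace ℝ (Fin (n + 1))) 1) :=
    contractibleSpace_closedBall zero_le_one
  obtain ⟨y, hy⟩ := ((id_nullhomotopic _).comp_right L).comp_left (sphereInclusion n)
  exact Nullhomotopic.exists_extension_closedBall ⟨y, hL.symm.trans hy⟩
end

section
/- Let Z be a smooth (C^∞) finite-dimensional manifold without boundary that is Hausdorff and second countable. Then there exist an open neighborhood W of the diagonal {(z, z) : z ∈ Z} in the product manifold Z × Z and a smooth map α : ℝ × (Z × Z) → Z, defined and smooth on an open subset of ℝ × (Z × Z) containing [0,1] × W, such that for all (z, z') ∈ W one has α(0, z, z') = z and α(1, z, z') = z', and for all t ∈ [0,1] and z ∈ Z with (z,z) ∈ W one has α(t, z, z) = z. -/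
/-!
Take a countable, locally finite smooth bump covering `f i` of `Z`, each `f i` supported in the
chart at `c i`, such that every point has some `f i` equal to `1` at it. Enumerate the indices and,
for given `(t, z, z')`, start at `z` and let the `i`-th step move the current point the fraction
`t * f i z` of the way towards `z'` along the straight segment in the chart at `c i`. Near a
point of the diagonal only finitely many steps act, so the result is locally a finite composite of
smooth maps. For `t = 0` or `z' = z` every step fixes `z`; for `t = 1` the step with `f i z = 1`
lands on `z'`, which every later step fixes as long as `z'` lies in the relevant charts.
-/

open Set Filter Function Encodable
open scoped Manifold Topology ContDiff

noncomputable section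

variable {E : Type*} [NormedAddCommGroup E] [NormedSpace ℝ E] {H : Type*} [TopologicalSpace H]
  {I : ModelWithCorners ℝ E H} {M : Type*} [TopologicalSpace M] [ChartedSpace H M]

variable (I) in
def chartLineMap (c x y : M) (s : ℝ) : M :=
  (extChartAt I c).symm (AffineMap.lineMap (extChartAt I c x) (extChartAt I c y) s)

section chartLineMap

variable {c x y : M}

theorem chartLineMap_zero (hx : x ∈ (chartAt H c).source) : chartLineMap I c x y 0 = x := by
  rw [chartLineMap, AffineMap.lineMap_apply_zero]
  exact (extChartAt I c).left_inv (by rwa [extChartAt_source])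

theorem chartLineMap_one (hy : y ∈ (chartAt H c).source) : chartLineMap I c x y 1 = y := by
  rw [chartLineMap, AffineMap.lineMap_apply_one]
  exact (extChartAt I c).left_inv (by rwa [extChartAt_source])

theorem chartLineMap_self (hx : x ∈ (chartAt H c).source) (s : ℝ) :
    chartLineMap I c x x s = x := by
  rw [chartLineMap, AffineMap.lineMap_same_apply]
  exact (extChartAt I c).left_inv (by rwa [extChartAt_source])

variable {E' : Type*} [NormedAddCommGroup E'] [NormedSpace ℝ E'] {H' : Type*}
  [TopologicalSpace H'] {J : ModelWithCorners ℝ E' H'} {N : Type*} [TopologicalSpace N]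
  [ChartedSpace H' N] {n : WithTop ℕ∞} [IsManifold I n M] [I.Boundaryless]

theorem eventually_contMDiffAt_chartLineMap {x y : N → M} {s : N → ℝ} {p₀ : N}
    (hxy : x p₀ = y p₀) (hp₀ : x p₀ ∈ (chartAt H c).source)
    (hx : ∀ᶠ q in 𝓝 p₀, ContMDiffAt J I n x q) (hy : ∀ᶠ q in 𝓝 p₀, ContMDiffAt J I n y q)
    (hs : ∀ᶠ q in 𝓝 p₀, ContMDiffAt J 𝓘(ℝ) n s q) :
    ∀ᶠ q in 𝓝 p₀, ContMDiffAt J I n (fun q ↦ chartLineMap I c (x q) (y q) (s q)) q := by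
  set e := extChartAt I c
  have hsource {g : N → M} (hg : ∀ᶠ q in 𝓝 p₀, ContMDiffAt J I n g q)
      (hg₀ : g p₀ ∈ (chartAt H c).source) : ∀ᶠ q in 𝓝 p₀, g q ∈ (chartAt H c).source :=
    hg.self_of_nhds.continuousAt.preimage_mem_nhds ((chartAt H c).open_source.mem_nhds hg₀)
  have hline {q : N} (hxq : ContMDiffAt J I n x q) (hyq : ContMDiffAt J I n y q)
      (hsq : ContMDiffAt J 𝓘(ℝ) n s q) (hxs : x q ∈ (chartAt H c).source)
      (hys : y q ∈ (chartAt H c).source) :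
      ContMDiffAt J 𝓘(ℝ, E) n (fun q ↦ AffineMap.lineMap (e (x q)) (e (y q)) (s q)) q := by
    simp_rw [AffineMap.lineMap_apply_module]
    exact ((contMDiffAt_const.sub hsq).smul ((contMDiffAt_extChartAt' hxs).comp q hxq)).add
      (hsq.smul ((contMDiffAt_extChartAt' hys).comp q hyq))
  have htarget : ∀ᶠ q in 𝓝 p₀, AffineMap.lineMap (e (x q)) (e (y q)) (s q) ∈ e.target := by
    refine (hline hx.self_of_nhds hy.self_of_nhds hs.self_of_nhds hp₀ (hxy ▸ hp₀)).continuousAt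
      |>.preimage_mem_nhds ((isOpen_extChartAt_target c).mem_nhds ?_)
    rw [hxy, AffineMap.lineMap_same_apply]
    exact e.map_source (by rwa [extChartAt_source, ← hxy])
  filter_upwards [hx, hy, hs, hsource hx hp₀, hsource hy (hxy ▸ hp₀), htarget]
    with q hxq hyq hsq hxs hys hq
  exact ((contMDiffOn_extChartAt_symm c).contMDiffAt
    ((isOpen_extChartAt_target c).mem_nhds hq)).comp q (hline hxq hyq hsq hxs hys)

end chartLineMap

namespace SmoothBumpCovering

variable [FiniteDimensional ℝ E] {ι : Type*} {s : Set M} (f : SmoothBumpCovering ι I M s)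

/-- The guard makes the step the identity off the support of `f i`, where the current point need
not lie in the chart at `f.c i`. -/
def interpStep (i : ι) (p : ℝ × M × M) (x : M) : M :=
  if f i p.2.1 = 0 then x else chartLineMap I (f.c i) x p.2.2 (p.1 * f i p.2.1)

section interpStep

variable {f} {i : ι} {p : ℝ × M × M} {x : M}

theorem interpStep_of_eq_zero (h : f i p.2.1 = 0) : f.interpStep i p x = x :=
  if_pos h

theorem interpStep_eq_chartLineMap (hx : x ∈ (chartAt H (f.c i)).source) :
    f.interpStep i p x = chartLineMap I (f.c i) x p.2.2 (p.1 * f i p.2.1) := by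
  by_cases h : f i p.2.1 = 0
  · rw [interpStep_of_eq_zero h, h, mul_zero, chartLineMap_zero hx]
  · exact if_neg h

theorem interpStep_fst (hp : p.1 = 0 ∨ p.2.2 = p.2.1) : f.interpStep i p p.2.1 = p.2.1 := by
  by_cases h : f i p.2.1 = 0
  · exact interpStep_of_eq_zero h
  have hsrc : p.2.1 ∈ (chartAt H (f.c i)).source := (f i).support_subset_source h
  rw [interpStep_eq_chartLineMap hsrc]
  rcases hp with ht | hz
  · rw [ht, zero_mul, chartLineMap_zero hsrc]
  · rw [hz, chartLineMap_self hsrc]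

end interpStep

theorem eventually_forall_ne_zero_imp_mem_tsupport (z : M) :
    ∀ᶠ y in 𝓝 z, ∀ i, f i y ≠ 0 → z ∈ tsupport (f i) :=
  (f.locallyFinite.closure.eventually_subset (fun _ ↦ isClosed_closure) z).mono
    fun _ hy _ hi ↦ hy (subset_closure hi)

theorem finite_setOf_mem_tsupport (z : M) : {i | z ∈ tsupport (f i)}.Finite :=
  f.locallyFinite.closure.point_finite z

theorem eventually_forall_ne_zero_imp_mem_chartAt_source [T2Space M] (z : M) :
    ∀ᶠ p in 𝓝 (z, z), ∀ i, f i p.1 ≠ 0 → p.2 ∈ (chartAt H (f.c i)).source := by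
  have hsource : ∀ᶠ y in 𝓝 z, ∀ i ∈ {i | z ∈ tsupport (f i)}, y ∈ (chartAt H (f.c i)).source :=
    (f.finite_setOf_mem_tsupport z).eventually_all.2 fun i hi ↦
      (chartAt H (f.c i)).open_source.mem_nhds ((f i).tsupport_subset_chartAt_source hi)
  exact ((f.eventually_forall_ne_zero_imp_mem_tsupport z).prod_nhds hsource).mono
    fun p hp i hi ↦ hp.2 i (hp.1 i hi)

theorem eventually_contMDiffAt_interpStep [T2Space M] [IsManifold I ∞ M] [I.Boundaryless]
    (i : ι) {g : ℝ × M × M → M} {p₀ : ℝ × M × M}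
    (hp₀ : p₀.2.2 = p₀.2.1) (hg₀ : g p₀ = p₀.2.1)
    (hg : ∀ᶠ q in 𝓝 p₀, ContMDiffAt (𝓘(ℝ).prod (I.prod I)) I ∞ g q) :
    ∀ᶠ q in 𝓝 p₀, ContMDiffAt (𝓘(ℝ).prod (I.prod I)) I ∞ (fun q ↦ f.interpStep i q (g q)) q := by
  by_cases hz₀ : p₀.2.1 ∈ tsupport (f i)
  · have hsrc : g p₀ ∈ (chartAt H (f.c i)).source :=
      hg₀ ▸ (f i).tsupport_subset_chartAt_source hz₀
    have hg_src : ∀ᶠ q in 𝓝 p₀, g q ∈ (chartAt H (f.c i)).source :=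
      hg.self_of_nhds.continuousAt.preimage_mem_nhds ((chartAt H _).open_source.mem_nhds hsrc)
    have hline := eventually_contMDiffAt_chartLineMap (c := f.c i) (hg₀.trans hp₀.symm) hsrc hg
      (.of_forall fun q ↦ (contMDiff_snd.comp contMDiff_snd).contMDiffAt)
      (.of_forall fun q ↦ (contMDiff_fst.mul
        ((f i).contMDiff.comp (contMDiff_fst.comp contMDiff_snd))).contMDiffAt)
    filter_upwards [hline, hg_src.eventually_nhds] with q hq hq_src
    exact hq.congr_of_eventuallyEq (hq_src.mono fun _ h ↦ interpStep_eq_chartLineMap h)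
  · have hzero : ∀ᶠ q in 𝓝 p₀, q.2.1 ∉ tsupport (f i) :=
      (continuous_fst.comp continuous_snd).continuousAt.preimage_mem_nhds
        ((isClosed_tsupport _).isOpen_compl.mem_nhds hz₀)
    filter_upwards [hg, hzero.eventually_nhds] with q hq hq_zero
    exact hq.congr_of_eventuallyEq (hq_zero.mono fun _ h ↦
      interpStep_of_eq_zero (image_eq_zero_of_notMem_tsupport h))

variable [Encodable ι]

def interpSeq : ℕ → ℝ × M × M → M
  | 0 => fun p ↦ p.2.1
  | n + 1 => fun p ↦ (decode₂ ι n).elim (interpSeq n p) fun i ↦ f.interpStep i p (interpSeq n p)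

def interpLength (z : M) : ℕ :=
  (f.point_finite z).toFinset.sup encode + 1

def interp (p : ℝ × M × M) : M :=
  f.interpSeq (f.interpLength p.2.1) p

theorem exists_eventually_forall_ne_zero_imp_encode_lt (z : M) :
    ∃ n, ∀ᶠ y in 𝓝 z, ∀ i, f i y ≠ 0 → encode i < n := by
  obtain ⟨n, hn⟩ := ((f.finite_setOf_mem_tsupport z).image encode).bddAbove
  exact ⟨n + 1, (f.eventually_forall_ne_zero_imp_mem_tsupport z).mono
    fun _ hy i hi ↦ Nat.lt_succ_of_le (hn (mem_image_of_mem _ (hy i hi)))⟩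

section interp

variable {f} {i : ι} {p : ℝ × M × M}

theorem interpSeq_eq_of_forall_interpStep_eq {y : M} {n m : ℕ} (hn : f.interpSeq n p = y)
    (hstep : ∀ i, n ≤ encode i → f.interpStep i p y = y) (hnm : n ≤ m) :
    f.interpSeq m p = y := by
  induction m, hnm using Nat.le_induction with
  | base => exact hn
  | succ m hnm ih =>
    rcases h : decode₂ ι m with _ | i
    · simp only [interpSeq, h, Option.elim, ih]
    · simp only [interpSeq, h, Option.elim, ih]
      exact hstep i ((mem_decode₂.1 h).symm ▸ hnm)

theorem interpSeq_fst (hp : p.1 = 0 ∨ p.2.2 = p.2.1) (n : ℕ) : f.interpSeq n p = p.2.1 :=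
  interpSeq_eq_of_forall_interpStep_eq rfl (fun _ _ ↦ interpStep_fst hp) n.zero_le

theorem interpSeq_eq_of_le {n m : ℕ} (h : ∀ i, f i p.2.1 ≠ 0 → encode i < n) (hnm : n ≤ m) :
    f.interpSeq m p = f.interpSeq n p :=
  interpSeq_eq_of_forall_interpStep_eq rfl
    (fun i hi ↦ interpStep_of_eq_zero (not_not.1 fun hne ↦ (h i hne).not_ge hi)) hnm

theorem interpSeq_time_one {z z' : M} (hz : z ∈ s)
    (hz' : ∀ i, f i z ≠ 0 → z' ∈ (chartAt H (f.c i)).source) {n : ℕ}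
    (hn : encode (f.ind z hz) < n) : f.interpSeq n (1, z, z') = z' := by
  set i₀ := f.ind z hz
  have h₀ : f i₀ z = 1 := f.apply_ind z hz
  refine interpSeq_eq_of_forall_interpStep_eq (n := encode i₀ + 1) ?_ (fun i _ ↦ ?_) hn
  · simp only [interpSeq, decode₂_encode, Option.elim]
    rw [interpStep, if_neg (by simp [h₀]), h₀, one_mul,
      chartLineMap_one (hz' i₀ (by simp [h₀]))]
  · by_cases hi : f i z = 0
    · exact interpStep_of_eq_zero hi
    · rw [interpStep_eq_chartLineMap (hz' i hi), chartLineMap_self (hz' i hi)]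

theorem encode_lt_interpLength {z : M} (h : f i z ≠ 0) : encode i < f.interpLength z :=
  Nat.lt_succ_of_le (Finset.le_sup ((f.point_finite z).mem_toFinset.2 h))

theorem interp_eq_interpSeq {n : ℕ} (h : ∀ i, f i p.2.1 ≠ 0 → encode i < n) :
    f.interp p = f.interpSeq n p := by
  rcases le_total n (f.interpLength p.2.1) with hn | hn
  · exact interpSeq_eq_of_le h hn
  · exact (interpSeq_eq_of_le (fun _ ↦ encode_lt_interpLength) hn).symm

theorem interp_fst (hp : p.1 = 0 ∨ p.2.2 = p.2.1) : f.interp p = p.2.1 :=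
  interpSeq_fst hp _

theorem interp_time_one {z z' : M} (hz : z ∈ s)
    (hz' : ∀ i, f i z ≠ 0 → z' ∈ (chartAt H (f.c i)).source) : f.interp (1, z, z') = z' :=
  interpSeq_time_one hz hz' (encode_lt_interpLength (by simp [f.apply_ind z hz]))

end interp

variable [T2Space M] [IsManifold I ∞ M] [I.Boundaryless]

theorem eventually_contMDiffAt_interpSeq (n : ℕ) (t : ℝ) (z : M) :
    ∀ᶠ q in 𝓝 (t, z, z), ContMDiffAt (𝓘(ℝ).prod (I.prod I)) I ∞ (f.interpSeq n) q := by
  induction n with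
  | zero => exact .of_forall fun q ↦ (contMDiff_fst.comp contMDiff_snd).contMDiffAt
  | succ n ih =>
    rcases h : decode₂ ι n with _ | i
    · simpa only [interpSeq, h, Option.elim] using ih
    · simpa only [interpSeq, h, Option.elim] using
        f.eventually_contMDiffAt_interpStep i rfl (interpSeq_fst (Or.inr rfl) n) ih

theorem eventually_contMDiffAt_interp (t : ℝ) (z : M) :
    ∀ᶠ q in 𝓝 (t, z, z), ContMDiffAt (𝓘(ℝ).prod (I.prod I)) I ∞ f.interp q := by
  obtain ⟨n, hn⟩ := f.exists_eventually_forall_ne_zero_imp_encode_lt z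
  have hn' : ∀ᶠ q in 𝓝 (t, z, z), ∀ i, f i q.2.1 ≠ 0 → encode i < n :=
    ((continuous_fst.comp continuous_snd).tendsto (t, z, z)).eventually hn
  filter_upwards [f.eventually_contMDiffAt_interpSeq n t z, hn'.eventually_nhds] with q hq hq_lt
  exact hq.congr_of_eventuallyEq (hq_lt.mono fun _ h ↦ interp_eq_interpSeq h)

end SmoothBumpCovering

end

/-- On a smooth, Hausdorff, second countable, boundaryless manifold `Z` there exist an
open neighborhood `W` of the diagonal in `Z × Z` and a smooth interpolation map
`α : ℝ × (Z × Z) → Z`, smooth on an open set containing `[0,1] × W`, with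
`α(0, z, z') = z`, `α(1, z, z') = z'` for `(z, z') ∈ W`, and `α(t, z, z) = z` for all
`t ∈ [0,1]`. -/
theorem exists_smooth_interpolation {d : ℕ} {Z : Type*} [TopologicalSpace Z]
    [ChartedSpace (EuclideanSpace ℝ (Fin d)) Z] [IsManifold (𝓡 d) (⊤ : ℕ∞) Z]
    [T2Space Z] [SecondCountableTopology Z] :
    ∃ (W : Set (Z × Z)) (U : Set (ℝ × Z × Z)) (α : ℝ × Z × Z → Z),
      IsOpen W ∧ (∀ z : Z, (z, z) ∈ W) ∧ IsOpen U ∧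
      (Set.Icc (0 : ℝ) 1) ×ˢ W ⊆ U ∧
      ContMDiffOn (𝓘(ℝ, ℝ).prod ((𝓡 d).prod (𝓡 d))) (𝓡 d) (⊤ : ℕ∞) α U ∧
      (∀ p ∈ W, α (0, p) = p.1) ∧
      (∀ p ∈ W, α (1, p) = p.2) ∧
      (∀ t ∈ Set.Icc (0 : ℝ) 1, ∀ z : Z, (z, z) ∈ W → α (t, z, z) = z) := by
  have : LocallyCompactSpace Z := ChartedSpace.locallyCompactSpace (EuclideanSpace ℝ (Fin d)) Z
  obtain ⟨ι, f, -⟩ := SmoothBumpCovering.exists_isSubordinate (𝓡 d) isClosed_univ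
    (U := fun _ : Z ↦ univ) fun _ _ ↦ univ_mem
  have : Countable ι := countable_univ_iff.1 <|
    f.locallyFinite.countable_univ fun i ↦ (f i).nonempty_support
  let := Encodable.ofCountable ι
  -- `ContMDiffAt _ _ ∞` at a point does not spread to a neighbourhood, hence the interior.
  set U := interior {q | ContMDiffAt (𝓘(ℝ, ℝ).prod ((𝓡 d).prod (𝓡 d))) (𝓡 d) ∞ f.interp q}
  set W := interior {p : Z × Z | (∀ t ∈ Icc (0 : ℝ) 1, (t, p) ∈ U) ∧
    ∀ i, f i p.1 ≠ 0 → p.2 ∈ (chartAt (EuclideanSpace ℝ (Fin d)) (f.c i)).source}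
  have hU (t : ℝ) (z : Z) : (t, z, z) ∈ U :=
    mem_interior_iff_mem_nhds.2 (f.eventually_contMDiffAt_interp t z)
  have hW (z : Z) : (z, z) ∈ W := by
    refine mem_interior_iff_mem_nhds.2 (Eventually.and ?_
      (f.eventually_forall_ne_zero_imp_mem_chartAt_source z))
    exact isCompact_Icc.eventually_forall_of_forall_eventually fun t _ ↦
      (continuous_swap.tendsto ((z, z), t)).eventually (isOpen_interior.mem_nhds (hU t z))
  refine ⟨W, U, f.interp, isOpen_interior, hW, isOpen_interior, ?_, ?_, ?_, ?_, ?_⟩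
  · rintro ⟨t, p⟩ ⟨ht, hp⟩
    exact (interior_subset hp).1 t ht
  · exact fun q hq ↦ ContMDiffAt.contMDiffWithinAt (interior_subset hq)
  · exact fun p _ ↦ f.interp_fst (Or.inl rfl)
  · exact fun p hp ↦ f.interp_time_one (mem_univ _) (interior_subset hp).2
  · exact fun t _ z _ ↦ f.interp_fst (Or.inr rfl)
end
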